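/- Let θ be a non-constant inner function and φ ∈ L². Then the truncated Toeplitz operator A^θ_φ is the zero operator (on the dense subset K_θ ∩ H^∞ of K_θ) if and only if φ ∈ θH² + conj(θH²), i.e., φ = θh₁ + conj(θh₂) for some h₁, h₂ ∈ H². -/

import Mathlib

open MeasureTheory Filter Topology ComplexConjugate ENNReal

noncomputable section

namespace HTTO

instance fact2pi : Fact (0 < 2 * Real.pi) := ⟨Real.two_pi_pos⟩

/-- The unit circle, modeled additively as `ℝ / 2πℤ`; the point `x` corresponds to `e^{ix}`. -/
abbrev Circ : Type := AddCircle (2 * Real.pi)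

/-- Normalized Haar (Lebesgue) measure on the circle. -/
abbrev hm : Measure Circ := AddCircle.haarAddCircle

/-- The Lebesgue space `L²` of the circle. -/
abbrev L2 : Type := Lp ℂ 2 hm

/-- The Lebesgue space `L^∞` of the circle. -/
abbrev Linf : Type := Lp ℂ ⊤ hm

/-- The `n`-th Fourier coefficient, as a continuous linear functional on `L²`. -/
def coeffCLM (n : ℤ) : L2 →L[ℂ] ℂ :=
  LinearMap.mkContinuous
    { toFun := fun f => fourierBasis.repr f n
      map_add' := fun f g => by simp
      map_smul' := fun c f => by simp }
    1
    (fun f => by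
      rw [one_mul]
      calc ‖fourierBasis.repr f n‖ ≤ ‖fourierBasis.repr f‖ :=
            lp.norm_apply_le_norm (by norm_num) _ n
        _ = ‖f‖ := by simp)

/-- The Hardy space `H²`: the subspace of `L²` of functions whose negative Fourier
coefficients vanish. -/
def H2 : Submodule ℂ L2 := ⨅ n : {m : ℤ // m < 0}, LinearMap.ker (coeffCLM n.1 : L2 →ₗ[ℂ] ℂ)

theorem isClosed_H2 : IsClosed (H2 : Set L2) := by
  have h : ((H2 : Submodule ℂ L2) : Set L2)
      = ⋂ n : {m : ℤ // m < 0}, ↑(LinearMap.ker (coeffCLM n.1 : L2 →ₗ[ℂ] ℂ)) := Submodule.coe_iInf _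
  rw [h]
  exact isClosed_iInter fun n => ContinuousLinearMap.isClosed_ker _

instance : CompleteSpace H2 := isClosed_H2.completeSpace_coe

/-- The orthogonal (Szegő/Riesz) projection `P` of `L²` onto `H²`,
as an endomorphism of `L²`. -/
def Pp : L2 →L[ℂ] L2 := H2.subtypeL.comp H2.orthogonalProjectionOnto

/-- The `L²` function `f * g`, for `f ∈ L^∞` and `g ∈ L²`, is in `L²`. -/
theorem mulMem (f : Linf) (g : L2) : MemLp (⇑f • ⇑g) 2 hm :=
  (Lp.memLp g).smul (Lp.memLp f)

/-- Pointwise multiplication `g ↦ f g` of an `L²` function by an `L^∞` function. -/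
def mulFun (f : Linf) (g : L2) : L2 := (mulMem f g).toLp (⇑f • ⇑g)

theorem coeFn_mulFun (f : Linf) (g : L2) : mulFun f g =ᵐ[hm] ⇑f • ⇑g :=
  MemLp.coeFn_toLp _

theorem mulFun_add (f : Linf) (g₁ g₂ : L2) :
    mulFun f (g₁ + g₂) = mulFun f g₁ + mulFun f g₂ := by
  apply Lp.ext
  filter_upwards [coeFn_mulFun f (g₁ + g₂), coeFn_mulFun f g₁, coeFn_mulFun f g₂,
    Lp.coeFn_add (mulFun f g₁) (mulFun f g₂), Lp.coeFn_add g₁ g₂] with x h1 h2 h3 h4 h5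
  simp only [h1, h4, Pi.add_apply, h2, h3, Pi.smul_apply, h5, smul_eq_mul, Pi.mul_apply, mul_add]

theorem mulFun_smul (f : Linf) (c : ℂ) (g : L2) :
    mulFun f (c • g) = c • mulFun f g := by
  apply Lp.ext
  filter_upwards [coeFn_mulFun f (c • g), coeFn_mulFun f g,
    Lp.coeFn_smul c (mulFun f g), Lp.coeFn_smul c g] with x h1 h2 h3 h4
  simp only [h1, h3, Pi.smul_apply, h2, h4, smul_eq_mul, Pi.mul_apply]
  ring

theorem mulFun_norm (f : Linf) (g : L2) : ‖mulFun f g‖ ≤ ‖f‖ * ‖g‖ := by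
  rw [mulFun, Lp.norm_toLp]
  calc (eLpNorm (⇑f • ⇑g) 2 hm).toReal
      ≤ (eLpNorm (⇑f) ⊤ hm * eLpNorm (⇑g) 2 hm).toReal :=
        ENNReal.toReal_mono
          (ENNReal.mul_ne_top (Lp.eLpNorm_ne_top f) (Lp.eLpNorm_ne_top g))
          (eLpNorm_smul_le_eLpNorm_top_mul_eLpNorm 2 (Lp.aestronglyMeasurable g) ⇑f)
    _ = ‖f‖ * ‖g‖ := by rw [ENNReal.toReal_mul]; rfl

/-- The multiplication operator `M_f : L² → L²`, `g ↦ f g`, for a symbol `f ∈ L^∞`. -/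
def mulCL (f : Linf) : L2 →L[ℂ] L2 :=
  LinearMap.mkContinuous
    { toFun := mulFun f
      map_add' := mulFun_add f
      map_smul' := mulFun_smul f }
    ‖f‖ (mulFun_norm f)

/-- The product of two `L^∞` functions, as an element of `L^∞`. -/
def mulInf (f g : Linf) : Linf :=
  ((Lp.memLp g).smul (Lp.memLp f)).toLp (⇑f • ⇑g)

/-- The complex conjugate of an `Lᵖ` function. -/
def conjLp {p : ℝ≥0∞} (f : Lp ℂ p hm) : Lp ℂ p hm :=
  MemLp.toLp (fun x => conj (f x))
    (MemLp.of_le (Lp.memLp f)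
      (RCLike.continuous_conj.comp_aestronglyMeasurable (Lp.aestronglyMeasurable f))
      (Eventually.of_forall fun x => by simp))

/-- The embedding of `L^∞` into `L²` (the measure is finite). -/
def inclL2 (f : Linf) : L2 := MemLp.toLp ⇑f ((Lp.memLp f).mono_exponent le_top)

/-- The constant function `1` in `L^∞`. -/
def oneInf : Linf := Lp.const ⊤ hm (1 : ℂ)

/-- The constant function `1` in `L²`. -/
def oneL2 : L2 := Lp.const 2 hm (1 : ℂ)

/-- `f ∈ L^∞` is constant (a.e.). -/
def IsConst (f : Linf) : Prop := ∃ c : ℂ, f = Lp.const ⊤ hm c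

/-- `θ ∈ L^∞` is an inner function: it is analytic (i.e. lies in `H^∞ = H² ∩ L^∞`)
and has modulus `1` a.e. on the circle. -/
structure IsInner (θ : Linf) : Prop where
  analytic : inclL2 θ ∈ H2
  unimodular : ∀ᵐ x ∂hm, ‖θ x‖ = 1

/-- The complementary projection `I - P` of `L²` onto `[H²]^⊥`. -/
def Qm : L2 →L[ℂ] L2 := ContinuousLinearMap.id ℂ L2 - Pp

/-- The Toeplitz operator `T_f h = P (f h)` with symbol `f ∈ L^∞`, realized as the
endomorphism `P M_f P` of `L²` (i.e. extended by zero on `[H²]^⊥`). -/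
def toep (f : Linf) : L2 →L[ℂ] L2 := Pp ∘L mulCL f ∘L Pp

/-- The Hankel operator `H_f h = (I - P)(f h)` with symbol `f ∈ L^∞`, realized as the
operator `(I-P) M_f P` on `L²` (i.e. extended by zero on `[H²]^⊥`). -/
def hank (f : Linf) : L2 →L[ℂ] L2 := Qm ∘L mulCL f ∘L Pp

/-- The operator `S_f h = (I - P)(f h)` on `[H²]^⊥` with symbol `f ∈ L^∞`, realized as
`(I-P) M_f (I-P)` on `L²` (i.e. extended by zero on `H²`). -/
def sop (f : Linf) : L2 →L[ℂ] L2 := Qm ∘L mulCL f ∘L Qm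

/-- The rank one operator `x ⊗ y : h ↦ ⟨h, y⟩ x`. -/
def rankOne (x y : L2) : L2 →L[ℂ] L2 := (innerSL ℂ y).smulRight x

/-- The subspace `θ H²` of `L²`. -/
def thetaH2 (θ : Linf) : Submodule ℂ L2 := H2.map (mulCL θ).toLinearMap

/-- The model space `K_θ = H² ⊖ θH² = H² ∩ (θH²)^⊥`. -/
def Ktheta (θ : Linf) : Submodule ℂ L2 := H2 ⊓ (thetaH2 θ)ᗮ

/-- The orthogonal projection `P_θ` of `L²` onto the model space `K_θ`, given by the
formula `P_θ f = P f - θ P(conj θ · f)`. -/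
def Pth (θ : Linf) : L2 →L[ℂ] L2 := Pp - mulCL θ ∘L Pp ∘L mulCL (conjLp θ)

/-- The truncated Toeplitz operator `A^θ_φ u = P_θ(φ u)` with symbol `φ ∈ L²`, applied to a
bounded function `u` (in the statements, `u` ranges over `K_θ ∩ H^∞`). -/
def ttoepApply (θ : Linf) (φ : L2) (u : Linf) : L2 := Pth θ (mulCL u φ)

/-- The truncated Hankel operator `H^θ_φ u = (I - P_θ)(φ u)` with symbol `φ ∈ L²`, applied to
a bounded function `u` (in the statements, `u` ranges over `K_θ ∩ H^∞`). -/
def thankApply (θ : Linf) (φ : L2) (u : Linf) : L2 := mulCL u φ - Pth θ (mulCL u φ)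

/-- The truncated Toeplitz operator `A^θ_f = P_θ M_f P_θ` with bounded symbol `f ∈ L^∞`,
extended by zero on the orthogonal complement of `K_θ`. -/
def ttoep (θ f : Linf) : L2 →L[ℂ] L2 := Pth θ ∘L mulCL f ∘L Pth θ

/-- The truncated Hankel operator `H^θ_f = (I - P_θ) M_f P_θ` with bounded symbol `f ∈ L^∞`,
extended by zero on the orthogonal complement of `K_θ`. -/
def thank (θ f : Linf) : L2 →L[ℂ] L2 :=
  (ContinuousLinearMap.id ℂ L2 - Pth θ) ∘L mulCL f ∘L Pth θ

/-- The antiunitary operator `V` on `L²`: `(V f)(w) = conj w * conj (f w)`. -/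
def Vop (f : L2) : L2 := mulCL (fourierLp ⊤ (-1)) (conjLp f)

theorem negMP : MeasurePreserving (fun x : Circ => -x) hm hm :=
  Measure.measurePreserving_neg hm

/-- The unitary operator `U` on `L²`: `(U f)(w) = conj w * f (conj w)`. -/
def Uop (f : L2) : L2 :=
  mulCL (fourierLp ⊤ (-1)) (Lp.compMeasurePreserving (fun x : Circ => -x) negMP f)

/-- The normalized reproducing kernel `k_z(w) = √(1-|z|²) / (1 - conj z * w)` of `H²`,
as a continuous function on the circle (`w = e^{ix}`). -/
def kC (z : ℂ) (hz : ‖z‖ < 1) : C(Circ, ℂ) :=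
  ⟨fun x => (Real.sqrt (1 - ‖z‖ ^ 2) : ℂ) / (1 - conj z * fourier 1 x), by
    apply Continuous.div continuous_const
    · exact Continuous.sub continuous_const (Continuous.mul continuous_const (map_continuous _))
    · intro x
      refine sub_ne_zero.2 fun h => absurd (congrArg norm h) ?_
      have h1 : ‖fourier 1 x‖ = 1 := Circle.norm_coe _
      simp only [norm_mul, RCLike.norm_conj, h1, mul_one, norm_one]
      exact fun hc => absurd hc.symm (ne_of_lt hz)⟩

open Classical in
/-- The normalized reproducing kernel `k_z` as an element of `L²` (junk value `0` if `|z| ≥ 1`). -/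
def kLp (z : ℂ) : L2 :=
  if hz : ‖z‖ < 1 then ContinuousMap.toLp 2 hm ℂ (kC z hz) else 0

/-- The Möbius transform `φ_z(w) = (z - w)/(1 - conj z * w)`, as a continuous function. -/
def phiC (z : ℂ) (hz : ‖z‖ < 1) : C(Circ, ℂ) :=
  ⟨fun x => (z - fourier 1 x) / (1 - conj z * fourier 1 x), by
    apply Continuous.div
    · exact Continuous.sub continuous_const (map_continuous _)
    · exact Continuous.sub continuous_const (Continuous.mul continuous_const (map_continuous _))
    · intro x
      refine sub_ne_zero.2 fun h => absurd (congrArg norm h) ?_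
      have h1 : ‖fourier 1 x‖ = 1 := Circle.norm_coe _
      simp only [norm_mul, RCLike.norm_conj, h1, mul_one, norm_one]
      exact fun hc => absurd hc.symm (ne_of_lt hz)⟩

open Classical in
/-- The Möbius transform `φ_z` as an element of `L^∞` (junk value `0` if `|z| ≥ 1`). -/
def phiInf (z : ℂ) : Linf :=
  if hz : ‖z‖ < 1 then ContinuousMap.toLp ⊤ hm ℂ (phiC z hz) else 0

/-- The filter of tangential approach `|z| → 1⁻` inside the unit disk. -/
def toBoundary : Filter ℂ := Filter.comap (fun z => ‖z‖) (𝓝[<] (1 : ℝ))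

/-- Membership in `K_θ + ℂθ = {h ∈ H² : θ conj h ∈ H²}`. -/
def MemKC (θ : Linf) (h : L2) : Prop := h ∈ H2 ∧ mulCL θ (conjLp h) ∈ H2




/-! ### Auxiliary development -/

open scoped ComplexInnerProductSpace

section Aux

/-! #### Coercion lemmas -/

theorem coeFn_inclL2 (f : Linf) : inclL2 f =ᵐ[hm] ⇑f := MemLp.coeFn_toLp _

theorem coeFn_conjLp {p : ℝ≥0∞} (f : Lp ℂ p hm) :
    conjLp f =ᵐ[hm] fun x => conj (f x) := MemLp.coeFn_toLp _

theorem coeFn_mulCL (f : Linf) (g : L2) :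
    mulCL f g =ᵐ[hm] fun x => f x * g x := by
  filter_upwards [coeFn_mulFun f g] with x h
  exact h

theorem coeFn_mulInf (f g : Linf) :
    mulInf f g =ᵐ[hm] fun x => f x * g x := by
  filter_upwards [MemLp.coeFn_toLp ((Lp.memLp g).smul (r := ⊤) (Lp.memLp f))] with x h
  exact h

theorem coeFn_oneL2 : (oneL2 : L2) =ᵐ[hm] fun _ => (1 : ℂ) := by
  filter_upwards [Lp.coeFn_const (α := Circ) 2 hm (1 : ℂ)] with x h
  exact h

theorem coeFn_oneInf : (oneInf : Linf) =ᵐ[hm] fun _ => (1 : ℂ) := by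
  filter_upwards [Lp.coeFn_const (α := Circ) ⊤ hm (1 : ℂ)] with x h
  exact h

/-! #### Fourier coefficients -/

/-- The `n`-th Fourier coefficient of an `L²` element. -/
def cf (f : L2) (n : ℤ) : ℂ := fourierCoeff (⇑f) n

theorem cf_eq_repr (f : L2) (n : ℤ) : cf f n = fourierBasis.repr f n :=
  (fourierBasis_repr f n).symm

theorem coeffCLM_apply (n : ℤ) (f : L2) : coeffCLM n f = cf f n :=
  (cf_eq_repr f n).symm

theorem fourierCoeff_congr_ae {f g : Circ → ℂ} (h : f =ᵐ[hm] g) (n : ℤ) :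
    fourierCoeff f n = fourierCoeff g n := by
  unfold fourierCoeff
  refine integral_congr_ae ?_
  filter_upwards [h] with x hx
  rw [hx]

theorem cf_congr_ae {f : L2} {g : Circ → ℂ} (h : ⇑f =ᵐ[hm] g) (n : ℤ) :
    cf f n = fourierCoeff g n := fourierCoeff_congr_ae h n

theorem cf_add (f g : L2) (n : ℤ) : cf (f + g) n = cf f n + cf g n := by
  simp [cf_eq_repr]

theorem cf_sub (f g : L2) (n : ℤ) : cf (f - g) n = cf f n - cf g n := by
  simp [cf_eq_repr]

theorem cf_smul (c : ℂ) (f : L2) (n : ℤ) : cf (c • f) n = c * cf f n := by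
  simp [cf_eq_repr]

theorem cf_zero (n : ℤ) : cf (0 : L2) n = 0 := by simp [cf_eq_repr]

theorem fourierBasis_eq (k : ℤ) : (fourierBasis (T := 2 * Real.pi)) k = fourierLp 2 k := by
  rw [← coe_fourierBasis]

theorem ext_cf {f g : L2} (h : ∀ n, cf f n = cf g n) : f = g := by
  refine fourierBasis.repr.injective ?_
  ext n
  rw [← cf_eq_repr, ← cf_eq_repr]
  exact h n

theorem cf_eq_inner (f : L2) (n : ℤ) : cf f n = ⟪(fourierLp 2 n : L2), f⟫ := by
  rw [cf_eq_repr, fourierBasis.repr_apply_apply, fourierBasis_eq]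

theorem cf_fourierLp (k n : ℤ) :
    cf (fourierLp 2 k : L2) n = if n = k then 1 else 0 := by
  classical
  rw [cf_eq_inner, ← fourierBasis_eq, ← fourierBasis_eq]
  exact orthonormal_iff_ite.1 fourierBasis.orthonormal n k

theorem mem_H2_iff {f : L2} : f ∈ H2 ↔ ∀ n < 0, cf f n = 0 := by
  rw [H2]
  rw [Submodule.mem_iInf]
  constructor
  · intro h n hn
    have := h ⟨n, hn⟩
    rw [LinearMap.mem_ker] at this
    rw [← coeffCLM_apply]
    exact this
  · intro h n
    rw [LinearMap.mem_ker]
    have := h n.1 n.2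
    rw [← coeffCLM_apply] at this
    exact this

theorem oneL2_eq : (oneL2 : L2) = fourierLp 2 0 := by
  refine Lp.ext ?_
  filter_upwards [coeFn_oneL2, coeFn_fourierLp 2 (0 : ℤ)] with x h1 h2
  rw [h1, h2, fourier_zero]

theorem cf_oneL2 (n : ℤ) : cf oneL2 n = if n = 0 then 1 else 0 := by
  rw [oneL2_eq, cf_fourierLp]

theorem fourierLp_mem_H2 {k : ℤ} (hk : 0 ≤ k) : (fourierLp 2 k : L2) ∈ H2 := by
  rw [mem_H2_iff]
  intro n hn
  rw [cf_fourierLp]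
  rw [if_neg (by omega)]

theorem oneL2_mem_H2 : (oneL2 : L2) ∈ H2 := by
  rw [oneL2_eq]; exact fourierLp_mem_H2 le_rfl

theorem mem_H2perp_iff {f : L2} : f ∈ H2ᗮ ↔ ∀ n, 0 ≤ n → cf f n = 0 := by
  constructor
  · intro h n hn
    rw [cf_eq_inner]
    exact (Submodule.mem_orthogonal H2 f).1 h _ (fourierLp_mem_H2 hn)
  · intro h
    rw [Submodule.mem_orthogonal]
    intro u hu
    rw [← fourierBasis.repr.inner_map_map u f, lp.inner_eq_tsum]
    have : ∀ i : ℤ, ⟪fourierBasis.repr u i, fourierBasis.repr f i⟫ = 0 := by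
      intro i
      rcases lt_or_ge i 0 with hi | hi
      · rw [← cf_eq_repr, mem_H2_iff.1 hu i hi]
        simp
      · rw [← cf_eq_repr f, h i hi]
        simp
    simp only [this]
    exact tsum_zero

/-! #### Multiplication and Fourier coefficients -/

theorem fourierCoeff_fourier_mul (g : Circ → ℂ) (m n : ℤ) :
    fourierCoeff (fun x => fourier m x * g x) n = fourierCoeff g (n - m) := by
  unfold fourierCoeff
  refine integral_congr_ae (Eventually.of_forall fun x => ?_)
  simp only [smul_eq_mul]
  rw [← mul_assoc, ← fourier_add]
  have h : -n + m = -(n - m) := by ring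
  rw [h]

theorem fourierCoeff_conj (f : Circ → ℂ) (n : ℤ) :
    fourierCoeff (fun x => conj (f x)) n = conj (fourierCoeff f (-n)) := by
  unfold fourierCoeff
  rw [← integral_conj]
  refine integral_congr_ae (Eventually.of_forall fun x => ?_)
  simp only [smul_eq_mul, map_mul, neg_neg, ← fourier_neg]

theorem cf_conjLp (f : L2) (n : ℤ) : cf (conjLp f) n = conj (cf f (-n)) := by
  rw [cf_congr_ae (coeFn_conjLp f) n, fourierCoeff_conj]
  rfl

theorem cf_mulCL_fourierLp (g : Linf) (k n : ℤ) :
    cf (mulCL g (fourierLp 2 k)) n = fourierCoeff (⇑g) (n - k) := by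
  have h : ⇑(mulCL g (fourierLp 2 k)) =ᵐ[hm] fun x => fourier k x * g x := by
    filter_upwards [coeFn_mulCL g (fourierLp 2 k), coeFn_fourierLp 2 k] with x h1 h2
    rw [h1, h2, mul_comm]
  rw [cf_congr_ae h, fourierCoeff_fourier_mul]

theorem cf_mulCL_shift (m : ℤ) (v : L2) (n : ℤ) :
    cf (mulCL (fourierLp ⊤ m) v) n = cf v (n - m) := by
  have h : ⇑(mulCL (fourierLp ⊤ m) v) =ᵐ[hm] fun x => fourier m x * v x := by
    filter_upwards [coeFn_mulCL (fourierLp ⊤ m) v, coeFn_fourierLp ⊤ m] with x h1 h2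
    rw [h1, h2]
  rw [cf_congr_ae h, fourierCoeff_fourier_mul]
  rfl

theorem cf_mulCL_eq_zero_lower (g : Linf) (v : L2) (a b : ℤ)
    (hg : ∀ m, m < a → fourierCoeff (⇑g) m = 0) (hv : ∀ m, m < b → cf v m = 0)
    {n : ℤ} (hn : n < a + b) : cf (mulCL g v) n = 0 := by
  have hsum := (fourierBasis.hasSum_repr v).mapL ((coeffCLM n).comp (mulCL g))
  have h0 : (fun k : ℤ => ((coeffCLM n).comp (mulCL g)) (fourierBasis.repr v k • fourierBasis k))
      = fun _ => (0 : ℂ) := by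
    funext k
    rcases lt_or_ge k b with hk | hk
    · have hz : fourierBasis.repr v k = 0 := by rw [← cf_eq_repr]; exact hv k hk
      rw [hz, zero_smul, map_zero]
    · rw [((coeffCLM n).comp (mulCL g)).map_smul]
      have : ((coeffCLM n).comp (mulCL g)) (fourierBasis k) = 0 := by
        rw [ContinuousLinearMap.comp_apply, coeffCLM_apply, fourierBasis_eq,
          cf_mulCL_fourierLp]
        exact hg _ (by omega)
      rw [this, smul_zero]
  have h2 : ((coeffCLM n).comp (mulCL g)) v = 0 := hsum.unique (h0 ▸ hasSum_zero)
  rw [ContinuousLinearMap.comp_apply, coeffCLM_apply] at h2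
  exact h2

theorem cf_mulCL_eq_zero_upper (g : Linf) (v : L2) (a b : ℤ)
    (hg : ∀ m, a < m → fourierCoeff (⇑g) m = 0) (hv : ∀ m, b < m → cf v m = 0)
    {n : ℤ} (hn : a + b < n) : cf (mulCL g v) n = 0 := by
  have hsum := (fourierBasis.hasSum_repr v).mapL ((coeffCLM n).comp (mulCL g))
  have h0 : (fun k : ℤ => ((coeffCLM n).comp (mulCL g)) (fourierBasis.repr v k • fourierBasis k))
      = fun _ => (0 : ℂ) := by
    funext k
    rcases lt_or_ge b k with hk | hk
    · have hz : fourierBasis.repr v k = 0 := by rw [← cf_eq_repr]; exact hv k hk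
      rw [hz, zero_smul, map_zero]
    · rw [((coeffCLM n).comp (mulCL g)).map_smul]
      have : ((coeffCLM n).comp (mulCL g)) (fourierBasis k) = 0 := by
        rw [ContinuousLinearMap.comp_apply, coeffCLM_apply, fourierBasis_eq,
          cf_mulCL_fourierLp]
        exact hg _ (by omega)
      rw [this, smul_zero]
  have h2 : ((coeffCLM n).comp (mulCL g)) v = 0 := hsum.unique (h0 ▸ hasSum_zero)
  rw [ContinuousLinearMap.comp_apply, coeffCLM_apply] at h2
  exact h2

end Aux


section Aux2

open scoped ComplexInnerProductSpace

/-! #### The projection `Pp` -/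

theorem Pp_apply (f : L2) : Pp f = (H2.orthogonalProjectionOnto f : L2) := rfl

theorem Pp_mem (f : L2) : Pp f ∈ H2 := by
  rw [Pp_apply]; exact (H2.orthogonalProjectionOnto f).2

theorem sub_Pp_mem (f : L2) : f - Pp f ∈ H2ᗮ :=
  H2.sub_starProjection_mem_orthogonal f

theorem Pp_of_mem {f : L2} (hf : f ∈ H2) : Pp f = f :=
  H2.starProjection_eq_self_iff.2 hf

theorem Pp_of_perp {f : L2} (hf : f ∈ H2ᗮ) : Pp f = 0 := by
  rw [Pp_apply, Submodule.orthogonalProjectionOnto_apply_of_mem_orthogonal hf,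
    Submodule.coe_zero]

theorem cf_Pp_of_nonneg (f : L2) {n : ℤ} (hn : 0 ≤ n) : cf (Pp f) n = cf f n := by
  have h := mem_H2perp_iff.1 (sub_Pp_mem f) n hn
  rw [cf_sub, sub_eq_zero] at h
  exact h.symm

theorem cf_Pp_of_neg (f : L2) {n : ℤ} (hn : n < 0) : cf (Pp f) n = 0 :=
  mem_H2_iff.1 (Pp_mem f) n hn

/-- If all strictly positive coefficients of `f` vanish then `Pp f` is constant. -/
theorem Pp_eq_of_upper {f : L2} (h : ∀ n, 0 < n → cf f n = 0) :
    Pp f = cf f 0 • oneL2 := by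
  refine ext_cf fun n => ?_
  rw [cf_smul, cf_oneL2]
  rcases lt_trichotomy n 0 with hn | hn | hn
  · rw [cf_Pp_of_neg f hn, if_neg (by omega), mul_zero]
  · subst hn
    rw [cf_Pp_of_nonneg f le_rfl, if_pos rfl, mul_one]
  · rw [cf_Pp_of_nonneg f hn.le, if_neg (by omega), mul_zero, h n hn]

/-! #### Multiplication algebra -/

theorem mulCL_comm (f g : Linf) (v : L2) :
    mulCL f (mulCL g v) = mulCL g (mulCL f v) := by
  apply Lp.ext
  filter_upwards [coeFn_mulCL f (mulCL g v), coeFn_mulCL g v,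
    coeFn_mulCL g (mulCL f v), coeFn_mulCL f v] with x h1 h2 h3 h4
  rw [h1, h2, h3, h4]
  ring

theorem cf_inclL2 (f : Linf) (n : ℤ) : cf (inclL2 f) n = fourierCoeff (⇑f) n :=
  cf_congr_ae (coeFn_inclL2 f) n

theorem cf_conjLp_inf (f : Linf) (n : ℤ) :
    fourierCoeff (⇑(conjLp f)) n = conj (fourierCoeff (⇑f) (-n)) := by
  rw [fourierCoeff_congr_ae (coeFn_conjLp f) n, fourierCoeff_conj]

variable {θ : Linf}

theorem unimodular_conj_mul (hθ : IsInner θ) :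
    ∀ᵐ x ∂hm, conj (θ x) * θ x = 1 := by
  filter_upwards [hθ.unimodular] with x hx
  rw [mul_comm, Complex.mul_conj]
  norm_cast
  rw [← Complex.sq_norm, hx]
  norm_num

theorem conjθ_mulCL_cancel (hθ : IsInner θ) (v : L2) :
    mulCL (conjLp θ) (mulCL θ v) = v := by
  apply Lp.ext
  filter_upwards [coeFn_mulCL (conjLp θ) (mulCL θ v), coeFn_mulCL θ v, coeFn_conjLp θ,
    unimodular_conj_mul hθ] with x h1 h2 h3 h4
  rw [h1, h3, h2, ← mul_assoc, h4, one_mul]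

theorem θ_mulCL_cancel (hθ : IsInner θ) (v : L2) :
    mulCL θ (mulCL (conjLp θ) v) = v := by
  apply Lp.ext
  filter_upwards [coeFn_mulCL θ (mulCL (conjLp θ) v), coeFn_mulCL (conjLp θ) v, coeFn_conjLp θ,
    unimodular_conj_mul hθ] with x h1 h2 h3 h4
  rw [h1, h2, h3, ← mul_assoc, mul_comm (θ x), h4, one_mul]

theorem cf_θ_of_neg (hθ : IsInner θ) {n : ℤ} (hn : n < 0) : fourierCoeff (⇑θ) n = 0 := by
  have h := mem_H2_iff.1 hθ.analytic n hn
  rwa [cf_inclL2] at h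

theorem cf_conjθ_of_pos (hθ : IsInner θ) {n : ℤ} (hn : 0 < n) :
    fourierCoeff (⇑(conjLp θ)) n = 0 := by
  rw [cf_conjLp_inf, cf_θ_of_neg hθ (by omega), map_zero]

theorem mulθ_mem_H2 (hθ : IsInner θ) {v : L2} (hv : v ∈ H2) : mulCL θ v ∈ H2 :=
  mem_H2_iff.2 fun n hn =>
    cf_mulCL_eq_zero_lower θ v 0 0 (fun m hm => cf_θ_of_neg hθ hm)
      (mem_H2_iff.1 hv) (by omega)

theorem mul_mem_H2 {u : Linf} (hu : inclL2 u ∈ H2) {v : L2} (hv : v ∈ H2) :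
    mulCL u v ∈ H2 :=
  mem_H2_iff.2 fun n hn =>
    cf_mulCL_eq_zero_lower u v 0 0
      (fun m hm => by rw [← cf_inclL2]; exact mem_H2_iff.1 hu m hm)
      (mem_H2_iff.1 hv) (by omega)

/-! #### Inner products -/

theorem inner_L2 (f g : L2) : ⟪f, g⟫ = ∫ x, conj (f x) * g x ∂hm := by
  rw [MeasureTheory.L2.inner_def]
  refine integral_congr_ae (Eventually.of_forall fun x => ?_)
  simp [RCLike.inner_apply, mul_comm]

theorem inner_mulCL_left (g : Linf) (x y : L2) :
    ⟪mulCL g x, y⟫ = ⟪x, mulCL (conjLp g) y⟫ := by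
  rw [inner_L2, inner_L2]
  refine integral_congr_ae ?_
  filter_upwards [coeFn_mulCL g x, coeFn_mulCL (conjLp g) y, coeFn_conjLp g]
    with t h1 h2 h3
  rw [h1, h2, h3, map_mul]
  ring

/-! #### The model space -/

theorem mem_Ktheta_iff {x : L2} :
    x ∈ Ktheta θ ↔ x ∈ H2 ∧ ∀ n, 0 ≤ n → cf (mulCL (conjLp θ) x) n = 0 := by
  rw [Ktheta, Submodule.mem_inf, and_congr_right_iff]
  intro _
  rw [← mem_H2perp_iff]
  constructor
  · intro h
    rw [Submodule.mem_orthogonal]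
    intro u hu
    have h2 := (Submodule.mem_orthogonal _ x).1 h (mulCL θ u)
      (Submodule.mem_map_of_mem hu)
    rwa [inner_mulCL_left] at h2
  · intro h
    rw [Submodule.mem_orthogonal]
    rintro u hu
    rcases Submodule.mem_map.1 hu with ⟨w, hw, rfl⟩
    rw [ContinuousLinearMap.coe_coe, inner_mulCL_left]
    exact (Submodule.mem_orthogonal _ _).1 h w hw

theorem Ktheta_le_H2 : Ktheta θ ≤ H2 := inf_le_left

theorem thetaH2_le_Kperp : thetaH2 θ ≤ (Ktheta θ)ᗮ := by
  refine le_trans (Submodule.le_orthogonal_orthogonal _) ?_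
  exact Submodule.orthogonal_le inf_le_right

theorem H2perp_le_Kperp : H2ᗮ ≤ (Ktheta θ)ᗮ :=
  Submodule.orthogonal_le inf_le_left

/-! #### The projection `Pth` -/

theorem Pth_apply (θ : Linf) (x : L2) :
    Pth θ x = Pp x - mulCL θ (Pp (mulCL (conjLp θ) x)) := rfl

theorem Pth_mem (hθ : IsInner θ) (x : L2) : Pth θ x ∈ Ktheta θ := by
  rw [mem_Ktheta_iff]
  constructor
  · rw [Pth_apply]
    exact Submodule.sub_mem _ (Pp_mem x) (mulθ_mem_H2 hθ (Pp_mem _))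
  · intro n hn
    have key : mulCL (conjLp θ) (Pth θ x)
        = mulCL (conjLp θ) (Pp x) - Pp (mulCL (conjLp θ) x) := by
      rw [Pth_apply, map_sub, conjθ_mulCL_cancel hθ]
    rw [key, cf_sub, cf_Pp_of_nonneg _ hn]
    have h4 : cf (mulCL (conjLp θ) (Pp x - x)) n = 0 := by
      refine cf_mulCL_eq_zero_upper (conjLp θ) (Pp x - x) 0 (-1)
        (fun m hm => cf_conjθ_of_pos hθ hm) (fun m hm => ?_) (by omega)
      have h5 := mem_H2perp_iff.1 (sub_Pp_mem x) m (by omega)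
      rw [cf_sub] at h5 ⊢
      rw [sub_eq_zero] at h5 ⊢
      exact h5.symm
    rw [map_sub, cf_sub] at h4
    rw [sub_eq_zero] at h4 ⊢
    exact h4

end Aux2


section Aux3

open scoped ComplexInnerProductSpace

variable {θ : Linf}

theorem sub_Pth_mem_Kperp (hθ : IsInner θ) (x : L2) : x - Pth θ x ∈ (Ktheta θ)ᗮ := by
  have h : x - Pth θ x = (x - Pp x) + mulCL θ (Pp (mulCL (conjLp θ) x)) := by
    rw [Pth_apply]; abel
  rw [h]
  exact Submodule.add_mem _ (H2perp_le_Kperp (sub_Pp_mem x))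
    (thetaH2_le_Kperp (Submodule.mem_map_of_mem (Pp_mem _)))

theorem inner_Pth_right (hθ : IsInner θ) {v : L2} (hv : v ∈ Ktheta θ) (x : L2) :
    ⟪v, Pth θ x⟫ = ⟪v, x⟫ := by
  have h := (Submodule.mem_orthogonal _ _).1 (sub_Pth_mem_Kperp hθ x) v hv
  rw [inner_sub_right, sub_eq_zero] at h
  exact h.symm

theorem Pth_of_perp (hθ : IsInner θ) {x : L2} (hx : x ∈ (Ktheta θ)ᗮ) : Pth θ x = 0 := by
  have h1 : ⟪Pth θ x, Pth θ x⟫ = 0 := by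
    rw [inner_Pth_right hθ (Pth_mem hθ x) x]
    exact (Submodule.mem_orthogonal _ _).1 hx _ (Pth_mem hθ x)
  exact inner_self_eq_zero.1 h1

theorem Pth_of_mem (hθ : IsInner θ) {v : L2} (hv : v ∈ Ktheta θ) : Pth θ v = v := by
  have h : v - Pth θ v ∈ Ktheta θ := Submodule.sub_mem _ hv (Pth_mem hθ v)
  have h2 := (Submodule.mem_orthogonal _ _).1 (sub_Pth_mem_Kperp hθ v) _ h
  rw [← sub_eq_zero, ← neg_eq_zero, neg_sub]
  exact inner_self_eq_zero.1 h2

theorem Pp_of_Kperp (hθ : IsInner θ) {y : L2} (hy : y ∈ (Ktheta θ)ᗮ) :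
    Pp y = mulCL θ (Pp (mulCL (conjLp θ) (Pp y))) := by
  have h1 : Pp y ∈ (Ktheta θ)ᗮ := by
    have h : Pp y = y - (y - Pp y) := by abel
    rw [h]
    exact Submodule.sub_mem _ hy (H2perp_le_Kperp (sub_Pp_mem y))
  have h2 := Pth_of_perp hθ h1
  rw [Pth_apply, Pp_of_mem (Pp_mem y), sub_eq_zero] at h2
  exact h2

/-! #### The easy inclusion -/

theorem Pth_mulθ_H2 (hθ : IsInner θ) {w : L2} (hw : w ∈ H2) : Pth θ (mulCL θ w) = 0 := by
  rw [Pth_apply, conjθ_mulCL_cancel hθ, Pp_of_mem hw, Pp_of_mem (mulθ_mem_H2 hθ hw), sub_self]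

theorem E1 (hθ : IsInner θ) {u : Linf} (hu : inclL2 u ∈ H2) {h : L2} (hh : h ∈ H2) :
    Pth θ (mulCL u (mulCL θ h)) = 0 := by
  rw [mulCL_comm]
  exact Pth_mulθ_H2 hθ (mul_mem_H2 hu hh)

theorem E2 (hθ : IsInner θ) {u : Linf} (hu : inclL2 u ∈ Ktheta θ) {h : L2} (hh : h ∈ H2) :
    Pth θ (mulCL u (conjLp (mulCL θ h))) = 0 := by
  have hgc : ∀ m, -1 < m → fourierCoeff (⇑(mulInf (conjLp θ) u)) m = 0 := by
    intro m hmm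
    have h1 : fourierCoeff (⇑(mulInf (conjLp θ) u)) m
        = cf (mulCL (conjLp θ) (inclL2 u)) m := by
      refine (fourierCoeff_congr_ae ?_ m).symm
      filter_upwards [coeFn_mulCL (conjLp θ) (inclL2 u), coeFn_inclL2 u,
        coeFn_mulInf (conjLp θ) u] with x hx1 hx2 hx3
      rw [hx1, hx2, hx3]
    rw [h1]
    exact (mem_Ktheta_iff.1 hu).2 m (by omega)
  have hxg : mulCL u (conjLp (mulCL θ h)) = mulCL (mulInf (conjLp θ) u) (conjLp h) := by
    apply Lp.ext
    filter_upwards [coeFn_mulCL u (conjLp (mulCL θ h)), coeFn_conjLp (mulCL θ h),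
      coeFn_mulCL θ h, coeFn_mulCL (mulInf (conjLp θ) u) (conjLp h),
      coeFn_mulInf (conjLp θ) u, coeFn_conjLp h, coeFn_conjLp θ] with x h1 h2 h3 h4 h5 h6 h7
    rw [h1, h2, h3, h4, h5, h6, h7, map_mul]
    ring
  have hch : ∀ m, (0:ℤ) < m → cf (conjLp h) m = 0 := by
    intro m hmm
    rw [cf_conjLp, mem_H2_iff.1 hh (-m) (by omega), map_zero]
  have hx_perp : mulCL u (conjLp (mulCL θ h)) ∈ H2ᗮ := by
    rw [hxg]
    refine mem_H2perp_iff.2 fun n hn => ?_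
    exact cf_mulCL_eq_zero_upper _ _ (-1) 0 hgc hch (by omega)
  have hg'c : ∀ m, -1 < m →
      fourierCoeff (⇑(mulInf (conjLp θ) (mulInf (conjLp θ) u))) m = 0 := by
    intro m hmm
    have h1 : fourierCoeff (⇑(mulInf (conjLp θ) (mulInf (conjLp θ) u))) m
        = cf (mulCL (conjLp θ) (inclL2 (mulInf (conjLp θ) u))) m := by
      refine (fourierCoeff_congr_ae ?_ m).symm
      filter_upwards [coeFn_mulCL (conjLp θ) (inclL2 (mulInf (conjLp θ) u)),
        coeFn_inclL2 (mulInf (conjLp θ) u),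
        coeFn_mulInf (conjLp θ) (mulInf (conjLp θ) u)] with x hx1 hx2 hx3
      rw [hx1, hx2, hx3]
    rw [h1]
    refine cf_mulCL_eq_zero_upper (conjLp θ) _ 0 (-1)
      (fun k hk => cf_conjθ_of_pos hθ hk)
      (fun k hk => by rw [cf_inclL2]; exact hgc k hk) (by omega)
  have hconj_perp : mulCL (conjLp θ) (mulCL u (conjLp (mulCL θ h))) ∈ H2ᗮ := by
    have hxg2 : mulCL (conjLp θ) (mulCL u (conjLp (mulCL θ h)))
        = mulCL (mulInf (conjLp θ) (mulInf (conjLp θ) u)) (conjLp h) := by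
      rw [hxg]
      apply Lp.ext
      filter_upwards [coeFn_mulCL (conjLp θ) (mulCL (mulInf (conjLp θ) u) (conjLp h)),
        coeFn_mulCL (mulInf (conjLp θ) u) (conjLp h),
        coeFn_mulCL (mulInf (conjLp θ) (mulInf (conjLp θ) u)) (conjLp h),
        coeFn_mulInf (conjLp θ) (mulInf (conjLp θ) u)] with x h1 h2 h3 h4
      rw [h1, h2, h3, h4]
      ring
    rw [hxg2]
    refine mem_H2perp_iff.2 fun n hn => ?_
    exact cf_mulCL_eq_zero_upper _ _ (-1) 0 hg'c hch (by omega)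
  rw [Pth_apply, Pp_of_perp hx_perp, Pp_of_perp hconj_perp, map_zero, sub_zero]

theorem easy_piece (hθ : IsInner θ) {u : Linf} (hu : inclL2 u ∈ Ktheta θ)
    {h₁ h₂ : L2} (hh₁ : h₁ ∈ H2) (hh₂ : h₂ ∈ H2) :
    ttoepApply θ (mulCL θ h₁ + conjLp (mulCL θ h₂)) u = 0 := by
  rw [ttoepApply, map_add, map_add]
  rw [E1 hθ (Ktheta_le_H2 hu) hh₁, E2 hθ hu hh₂, add_zero]

end Aux3


section Aux4

open scoped ComplexInnerProductSpace

variable {θ : Linf}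

/-! #### `conjLp` algebra -/

theorem conjLp_add {p : ℝ≥0∞} (f g : Lp ℂ p hm) :
    conjLp (f + g) = conjLp f + conjLp g := by
  apply Lp.ext
  filter_upwards [coeFn_conjLp (f + g), coeFn_conjLp f, coeFn_conjLp g,
    Lp.coeFn_add (conjLp f) (conjLp g), Lp.coeFn_add f g] with x h1 h2 h3 h4 h5
  rw [h1, h4, Pi.add_apply, h2, h3, h5, Pi.add_apply, map_add]

theorem conjLp_smul {p : ℝ≥0∞} (c : ℂ) (f : Lp ℂ p hm) :
    conjLp (c • f) = conj c • conjLp f := by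
  apply Lp.ext
  filter_upwards [coeFn_conjLp (c • f), coeFn_conjLp f,
    Lp.coeFn_smul (conj c) (conjLp f), Lp.coeFn_smul c f] with x h1 h2 h3 h4
  rw [h1, h3, Pi.smul_apply, h2, h4, Pi.smul_apply, smul_eq_mul, smul_eq_mul, map_mul]

theorem conjLp_conjLp {p : ℝ≥0∞} (f : Lp ℂ p hm) : conjLp (conjLp f) = f := by
  apply Lp.ext
  filter_upwards [coeFn_conjLp (conjLp f), coeFn_conjLp f] with x h1 h2
  rw [h1, h2, Complex.conj_conj]

theorem conjLp_oneL2 : conjLp oneL2 = oneL2 := by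
  apply Lp.ext
  filter_upwards [coeFn_conjLp oneL2, coeFn_oneL2] with x h1 h2
  rw [h1, h2]
  simp

/-! #### `inclL2` algebra -/

theorem inclL2_sub (f g : Linf) : inclL2 (f - g) = inclL2 f - inclL2 g := by
  apply Lp.ext
  filter_upwards [coeFn_inclL2 (f - g), coeFn_inclL2 f, coeFn_inclL2 g,
    Lp.coeFn_sub (inclL2 f) (inclL2 g), Lp.coeFn_sub f g] with x h1 h2 h3 h4 h5
  rw [h1, h4, Pi.sub_apply, h2, h3, h5, Pi.sub_apply]

theorem inclL2_smul (c : ℂ) (f : Linf) : inclL2 (c • f) = c • inclL2 f := by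
  apply Lp.ext
  filter_upwards [coeFn_inclL2 (c • f), coeFn_inclL2 f,
    Lp.coeFn_smul c (inclL2 f), Lp.coeFn_smul c f] with x h1 h2 h3 h4
  rw [h1, h3, Pi.smul_apply, h2, h4, Pi.smul_apply]

theorem inclL2_oneInf : inclL2 oneInf = oneL2 := by
  apply Lp.ext
  filter_upwards [coeFn_inclL2 oneInf, coeFn_oneInf, coeFn_oneL2] with x h1 h2 h3
  rw [h1, h2, h3]

theorem inclL2_fourierLp (k : ℤ) : inclL2 (fourierLp ⊤ k) = fourierLp 2 k := by
  apply Lp.ext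
  filter_upwards [coeFn_inclL2 (fourierLp ⊤ k), coeFn_fourierLp ⊤ k, coeFn_fourierLp 2 k]
    with x h1 h2 h3
  rw [h1, h2, h3]

theorem inclL2_mulInf (f g : Linf) : inclL2 (mulInf f g) = mulCL f (inclL2 g) := by
  apply Lp.ext
  filter_upwards [coeFn_inclL2 (mulInf f g), coeFn_mulInf f g,
    coeFn_mulCL f (inclL2 g), coeFn_inclL2 g] with x h1 h2 h3 h4
  rw [h1, h2, h3, h4]

/-! #### The coefficient `t0` and the kernel `k0` -/

/-- The `0`-th Fourier coefficient of `θ`. -/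
def t0 (θ : Linf) : ℂ := fourierCoeff (⇑θ) 0

/-- `κ = 1 - |t0|²`. -/
def kk (θ : Linf) : ℂ := 1 - conj (t0 θ) * t0 θ

/-- The reproducing kernel at `0`, as an element of `L^∞`. -/
def k0inf (θ : Linf) : Linf := oneInf - conj (t0 θ) • θ

/-- The reproducing kernel at `0`, as an element of `L²`. -/
def k0L2 (θ : Linf) : L2 := oneL2 - conj (t0 θ) • inclL2 θ

theorem inclL2_k0inf : inclL2 (k0inf θ) = k0L2 θ := by
  rw [k0inf, k0L2, inclL2_sub, inclL2_smul, inclL2_oneInf]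

theorem cf_k0 (n : ℤ) :
    cf (k0L2 θ) n = (if n = 0 then 1 else 0) - conj (t0 θ) * fourierCoeff (⇑θ) n := by
  rw [k0L2, cf_sub, cf_smul, cf_oneL2, cf_inclL2]

theorem cf_k0_zero : cf (k0L2 θ) 0 = kk θ := by
  rw [cf_k0, if_pos rfl, kk, t0]

theorem inner_oneL2_self : ⟪(oneL2 : L2), (oneL2 : L2)⟫ = 1 := by
  have h := cf_oneL2 0
  rw [cf_eq_inner, ← oneL2_eq, if_pos rfl] at h
  exact h

theorem inner_oneL2_theta : ⟪(oneL2 : L2), inclL2 θ⟫ = t0 θ := by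
  have h := cf_inclL2 θ 0
  rw [cf_eq_inner, ← oneL2_eq] at h
  rw [h, t0]

theorem inner_theta_self (hθ : IsInner θ) : ⟪inclL2 θ, inclL2 θ⟫ = 1 := by
  rw [inner_L2]
  have h : ∫ x, conj ((inclL2 θ) x) * (inclL2 θ) x ∂hm = ∫ _x, (1 : ℂ) ∂hm := by
    refine integral_congr_ae ?_
    filter_upwards [coeFn_inclL2 θ, unimodular_conj_mul hθ] with x h1 h2
    rw [h1, h2]
  rw [h, integral_const]
  simp

theorem norm_t0_lt_one (hθ : IsInner θ) (hθnc : ¬ IsConst θ) : ‖t0 θ‖ < 1 := by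
  set w : L2 := inclL2 θ - t0 θ • oneL2 with hw
  have key : conj (t0 θ) * t0 θ = ((‖t0 θ‖ : ℂ)) ^ 2 := by
    rw [mul_comm, Complex.mul_conj, Complex.normSq_eq_norm_sq]
    push_cast
    ring
  have hww : ⟪w, w⟫ = ((1 - ‖t0 θ‖ ^ 2 : ℝ) : ℂ) := by
    have e1 : ⟪inclL2 θ, (oneL2 : L2)⟫ = conj (t0 θ) := by
      rw [← inner_conj_symm, inner_oneL2_theta]
    rw [hw, inner_sub_left, inner_sub_right, inner_sub_right, inner_smul_left,
      inner_smul_right, inner_smul_right, inner_smul_left, inner_theta_self hθ,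
      inner_oneL2_self, inner_oneL2_theta, e1]
    push_cast
    rw [← key]
    ring
  have hn : (1 - ‖t0 θ‖ ^ 2 : ℝ) = ‖w‖ ^ 2 := by
    have h2 : ⟪w, w⟫ = ((‖w‖ : ℂ)) ^ 2 := inner_self_eq_norm_sq_to_K w
    rw [hww] at h2
    exact_mod_cast h2
  have hle : ‖t0 θ‖ ≤ 1 := by nlinarith [sq_nonneg ‖w‖, norm_nonneg (t0 θ)]
  rcases lt_or_eq_of_le hle with h | h
  · exact h
  · exfalso
    have hw0 : w = 0 := by
      have : ‖w‖ ^ 2 = 0 := by rw [← hn, h]; ring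
      have h3 : ‖w‖ = 0 := by nlinarith [norm_nonneg w]
      exact norm_eq_zero.1 h3
    have heq : inclL2 θ = t0 θ • oneL2 := by
      rw [← sub_eq_zero]
      exact hw0
    refine hθnc ⟨t0 θ, ?_⟩
    apply Lp.ext
    have h2 : ⇑(inclL2 θ) =ᵐ[hm] fun _ => t0 θ := by
      rw [heq]
      filter_upwards [Lp.coeFn_smul (t0 θ) (oneL2 : L2), coeFn_oneL2] with x h3 h4
      rw [h3, Pi.smul_apply, h4, smul_eq_mul, mul_one]
    filter_upwards [coeFn_inclL2 θ, h2, Lp.coeFn_const (α := Circ) ⊤ hm (t0 θ)]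
      with x h3 h4 h5
    rw [← h3, h4, h5]
    rfl

theorem kk_ne_zero (hθ : IsInner θ) (hθnc : ¬ IsConst θ) : kk θ ≠ 0 := by
  rw [kk, sub_ne_zero]
  intro h
  have h2 : ‖conj (t0 θ) * t0 θ‖ = 1 := by rw [← h]; norm_num
  rw [norm_mul, RCLike.norm_conj] at h2
  nlinarith [norm_t0_lt_one hθ hθnc, norm_nonneg (t0 θ)]

theorem conj_kk : conj (kk θ) = kk θ := by
  rw [kk]
  rw [map_sub, map_one, map_mul, Complex.conj_conj, mul_comm]

theorem mulconjθ_oneL2 : mulCL (conjLp θ) oneL2 = conjLp (inclL2 θ) := by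
  apply Lp.ext
  filter_upwards [coeFn_mulCL (conjLp θ) oneL2, coeFn_oneL2, coeFn_conjLp θ,
    coeFn_conjLp (inclL2 θ), coeFn_inclL2 θ] with x h1 h2 h3 h4 h5
  rw [h1, h2, h3, h4, h5, mul_one]

theorem mulconjθ_inclθ (hθ : IsInner θ) : mulCL (conjLp θ) (inclL2 θ) = oneL2 := by
  apply Lp.ext
  filter_upwards [coeFn_mulCL (conjLp θ) (inclL2 θ), coeFn_inclL2 θ, coeFn_conjLp θ,
    coeFn_oneL2, unimodular_conj_mul hθ] with x h1 h2 h3 h4 h5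
  rw [h1, h2, h3, h4, h5]

theorem k0_mem (hθ : IsInner θ) : k0L2 θ ∈ Ktheta θ := by
  rw [mem_Ktheta_iff]
  constructor
  · rw [mem_H2_iff]
    intro n hn
    rw [cf_k0, if_neg (by omega), cf_θ_of_neg hθ hn, mul_zero, sub_zero]
  · intro n hn
    have h1 : mulCL (conjLp θ) (k0L2 θ)
        = conjLp (inclL2 θ) - conj (t0 θ) • oneL2 := by
      rw [k0L2, map_sub, (mulCL (conjLp θ)).map_smul, mulconjθ_oneL2, mulconjθ_inclθ hθ]
    rw [h1, cf_sub, cf_smul, cf_oneL2, cf_conjLp, cf_inclL2]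
    rcases lt_or_eq_of_le hn with h | h
    · rw [cf_θ_of_neg hθ (by omega), map_zero, if_neg (by omega), mul_zero, sub_zero]
    · rw [← h, if_pos rfl, mul_one, neg_zero, t0, sub_self]

theorem k0_ne_zero (hθ : IsInner θ) (hθnc : ¬ IsConst θ) : k0L2 θ ≠ 0 := by
  intro h
  have h2 := cf_k0_zero (θ := θ)
  rw [h, cf_zero] at h2
  exact kk_ne_zero hθ hθnc h2.symm

theorem inner_k0_self_ne_zero (hθ : IsInner θ) (hθnc : ¬ IsConst θ) :
    ⟪k0L2 θ, k0L2 θ⟫ ≠ 0 := by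
  intro h
  exact k0_ne_zero hθ hθnc (inner_self_eq_zero.1 h)

end Aux4


section Aux5

open scoped ComplexInnerProductSpace

variable {θ : Linf}

/-! #### The backward shift -/

/-- The backward shift `S* v = conj z (v - v̂(0))` on `L²`. -/
def sstarL2 (v : L2) : L2 := mulCL (fourierLp ⊤ (-1)) (v - cf v 0 • oneL2)

/-- The backward shift on `L^∞`. -/
def sstarInf (u : Linf) : Linf :=
  mulInf (fourierLp ⊤ (-1)) (u - fourierCoeff (⇑u) 0 • oneInf)

theorem inclL2_sstarInf (u : Linf) : inclL2 (sstarInf u) = sstarL2 (inclL2 u) := by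
  rw [sstarInf, sstarL2, inclL2_mulInf, inclL2_sub, inclL2_smul, inclL2_oneInf, cf_inclL2]

theorem cf_sstarL2 (v : L2) (n : ℤ) :
    cf (sstarL2 v) n = cf v (n + 1) - cf v 0 * (if n + 1 = 0 then 1 else 0) := by
  rw [sstarL2, cf_mulCL_shift, cf_sub, cf_smul, cf_oneL2]
  norm_num

theorem sstar_mem (hθ : IsInner θ) {v : L2} (hv : v ∈ Ktheta θ) :
    sstarL2 v ∈ Ktheta θ := by
  have hvm := mem_Ktheta_iff.1 hv
  rw [mem_Ktheta_iff]
  constructor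
  · rw [mem_H2_iff]
    intro n hn
    rw [cf_sstarL2]
    rcases lt_or_eq_of_le (by omega : n + 1 ≤ 0) with h | h
    · rw [mem_H2_iff.1 hvm.1 (n+1) h, if_neg (by omega), mul_zero, sub_zero]
    · rw [h, if_pos rfl, mul_one, sub_self]
  · intro n hn
    have h1 : mulCL (conjLp θ) (sstarL2 v)
        = mulCL (fourierLp ⊤ (-1)) (mulCL (conjLp θ) (v - cf v 0 • oneL2)) := by
      rw [sstarL2, mulCL_comm]
    rw [h1, cf_mulCL_shift, map_sub, (mulCL (conjLp θ)).map_smul, cf_sub, cf_smul,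
      mulconjθ_oneL2, cf_conjLp, cf_inclL2]
    rw [hvm.2 (n - -1) (by omega), cf_θ_of_neg hθ (by omega), map_zero, mul_zero, zero_sub,
      neg_zero]

/-! #### Trigonometric polynomials -/

theorem coeFn_poly {p : ℝ≥0∞} [Fact (1 ≤ p)] (s : Finset ℤ) (c : ℤ → ℂ) :
    ⇑(∑ j ∈ s, c j • (fourierLp p j : Lp ℂ p hm)) =ᵐ[hm]
      fun x => ∑ j ∈ s, c j * fourier j x := by
  classical
  induction s using Finset.induction_on with
  | empty =>
      simp only [Finset.sum_empty]
      filter_upwards [Lp.coeFn_zero (E := ℂ) (p := p) (μ := hm)] with x h1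
      simpa using h1
  | @insert a s ha ih =>
      rw [Finset.sum_insert ha]
      filter_upwards [Lp.coeFn_add (c a • (fourierLp p a : Lp ℂ p hm))
        (∑ j ∈ s, c j • (fourierLp p j : Lp ℂ p hm)),
        Lp.coeFn_smul (c a) (fourierLp p a : Lp ℂ p hm), coeFn_fourierLp p a, ih]
        with x h1 h2 h3 h4
      rw [h1, Pi.add_apply, h2, Pi.smul_apply, h3, h4, Finset.sum_insert ha, smul_eq_mul]

theorem fin_expand (x : L2) (s : Finset ℤ) (h : ∀ n ∉ s, cf x n = 0) :
    x = ∑ n ∈ s, cf x n • (fourierLp 2 n : L2) := by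
  classical
  refine ext_cf fun m => ?_
  have h1 : cf (∑ n ∈ s, cf x n • (fourierLp 2 n : L2)) m
      = ∑ n ∈ s, (if m = n then cf x n else 0) := by
    rw [← coeffCLM_apply, map_sum]
    refine Finset.sum_congr rfl fun n _ => ?_
    rw [(coeffCLM m).map_smul, coeffCLM_apply, cf_fourierLp]
    simp only [smul_eq_mul, mul_ite, mul_one, mul_zero]
  rw [h1, Finset.sum_ite_eq]
  by_cases hms : m ∈ s
  · rw [if_pos hms]
  · rw [if_neg hms, h m hms]

/-! #### Density of bounded elements in `K_θ` -/

theorem Pth_fourierLp_neg (hθ : IsInner θ) {k : ℤ} (hk : k < 0) :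
    Pth θ (fourierLp 2 k) = 0 := by
  rw [Pth_apply]
  have h1 : Pp (fourierLp 2 k : L2) = 0 := by
    refine Pp_of_perp (mem_H2perp_iff.2 fun n hn => ?_)
    rw [cf_fourierLp, if_neg (by omega)]
  have h2 : Pp (mulCL (conjLp θ) (fourierLp 2 k)) = 0 := by
    refine Pp_of_perp (mem_H2perp_iff.2 fun n hn => ?_)
    rw [cf_mulCL_fourierLp, cf_conjLp_inf, cf_θ_of_neg hθ (by omega), map_zero]
  rw [h1, h2, map_zero, sub_zero]

theorem Pth_fourierLp_bounded (hθ : IsInner θ) (k : ℤ) :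
    ∃ u : Linf, inclL2 u = Pth θ (fourierLp 2 k) := by
  rcases lt_or_ge k 0 with hk | hk
  · refine ⟨0, ?_⟩
    rw [Pth_fourierLp_neg hθ hk]
    apply Lp.ext
    filter_upwards [coeFn_inclL2 (0 : Linf), Lp.coeFn_zero (E := ℂ) (p := ⊤) (μ := hm),
      Lp.coeFn_zero (E := ℂ) (p := 2) (μ := hm)] with x h1 h2 h3
    rw [h1, h2, h3]
  · set yk := Pp (mulCL (conjLp θ) (fourierLp 2 k)) with hyk
    set c : ℤ → ℂ := fun j => cf yk j with hc
    have hsupp : ∀ n ∉ Finset.Icc (0 : ℤ) k, cf yk n = 0 := by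
      intro n hn
      rw [Finset.mem_Icc] at hn
      push_neg at hn
      rcases lt_or_ge n 0 with h | h
      · exact cf_Pp_of_neg _ h
      · rw [hyk, cf_Pp_of_nonneg _ h, cf_mulCL_fourierLp, cf_conjLp_inf,
          cf_θ_of_neg hθ (by omega), map_zero]
    have hexp : yk = ∑ j ∈ Finset.Icc (0 : ℤ) k, c j • (fourierLp 2 j : L2) :=
      fin_expand yk _ hsupp
    refine ⟨fourierLp ⊤ k - mulInf θ (∑ j ∈ Finset.Icc (0 : ℤ) k, c j • (fourierLp ⊤ j : Linf)),
      ?_⟩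
    rw [inclL2_sub, inclL2_mulInf, inclL2_fourierLp, Pth_apply,
      Pp_of_mem (fourierLp_mem_H2 hk), ← hyk, hexp]
    congr 1
    congr 1
    apply Lp.ext
    filter_upwards [coeFn_inclL2 (∑ j ∈ Finset.Icc (0 : ℤ) k, c j • (fourierLp ⊤ j : Linf)),
      coeFn_poly (p := ⊤) (Finset.Icc (0 : ℤ) k) c,
      coeFn_poly (p := 2) (Finset.Icc (0 : ℤ) k) c] with x h1 h2 h3
    rw [h1, h2, h3]

theorem test_dense (hθ : IsInner θ) (y : L2)
    (h : ∀ u : Linf, inclL2 u ∈ Ktheta θ → ⟪y, inclL2 u⟫ = 0) :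
    ∀ v ∈ Ktheta θ, ⟪y, v⟫ = 0 := by
  have key : ∀ k : ℤ, ((innerSL ℂ y).comp (Pth θ)) (fourierLp 2 k) = 0 := by
    intro k
    rcases Pth_fourierLp_bounded hθ k with ⟨u, hu⟩
    have hmem : inclL2 u ∈ Ktheta θ := by rw [hu]; exact Pth_mem hθ _
    have := h u hmem
    rw [hu] at this
    simpa using this
  have hker : Submodule.span ℂ (Set.range (⇑(fourierBasis (T := 2 * Real.pi))))
      ≤ LinearMap.ker ((innerSL ℂ y).comp (Pth θ) : L2 →ₗ[ℂ] ℂ) := by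
    rw [Submodule.span_le]
    rintro _ ⟨k, rfl⟩
    rw [SetLike.mem_coe, LinearMap.mem_ker, fourierBasis_eq]
    exact key k
  have hall : ∀ x : L2, ((innerSL ℂ y).comp (Pth θ)) x = 0 := by
    intro x
    have hx : x ∈ closure ((Submodule.span ℂ
        (Set.range (⇑(fourierBasis (T := 2 * Real.pi))))) : Set L2) := by
      have hxx : x ∈ ((Submodule.span ℂ
          (Set.range (⇑(fourierBasis (T := 2 * Real.pi))))).topologicalClosure : Set L2) := by
        rw [fourierBasis.dense_span]
        trivial
      exact hxx
    have h2 := closure_minimal (fun a ha => hker ha)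
      (ContinuousLinearMap.isClosed_ker ((innerSL ℂ y).comp (Pth θ))) hx
    exact LinearMap.mem_ker.1 h2
  intro v hv
  have := hall v
  rw [ContinuousLinearMap.comp_apply, Pth_of_mem hθ hv] at this
  simpa using this

end Aux5


section Aux6

open scoped ComplexInnerProductSpace

variable {θ : Linf}

/-! #### Integrability -/

theorem intg2 (f g : L2) : Integrable (fun x => conj (f x) * g x) hm := by
  have h := L2.integrable_inner (𝕜 := ℂ) f g
  simpa [RCLike.inner_apply, mul_comm] using h

theorem intg3 (v : L2) (u : Linf) (φ : L2) :
    Integrable (fun x => conj (v x) * (u x * φ x)) hm := by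
  refine (intg2 v (mulCL u φ)).congr ?_
  filter_upwards [coeFn_mulCL u φ] with x hx
  rw [hx]

theorem intg1 (u : Linf) (φ : L2) : Integrable (fun x => u x * φ x) hm := by
  refine ((mulMem u φ).integrable (by norm_num)).congr ?_
  refine Eventually.of_forall fun x => ?_
  simp [smul_eq_mul]

theorem intg0 (φ : L2) : Integrable (fun x => φ x) hm :=
  (Lp.memLp φ).integrable (by norm_num)

theorem intg2' (f g : L2) : Integrable (fun x => f x * g x) hm := by
  refine (intg2 (conjLp f) g).congr ?_
  filter_upwards [coeFn_conjLp f] with x hx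
  rw [hx, Complex.conj_conj]

/-! #### The basic vanishing pairing -/

theorem ttoepApply_eq (θ : Linf) (φ : L2) (u : Linf) :
    ttoepApply θ φ u = Pth θ (mulCL u φ) := rfl

theorem pairing_zero (hθ : IsInner θ) {φ : L2} {u : Linf}
    (hz : Pth θ (mulCL u φ) = 0) {v : L2} (hv : v ∈ Ktheta θ) :
    ∫ x, conj (v x) * (u x * φ x) ∂hm = 0 := by
  have h1 : ⟪v, mulCL u φ⟫ = 0 := by
    rw [← inner_Pth_right hθ hv, hz, inner_zero_right]
  rw [inner_L2] at h1
  rw [← h1]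
  refine integral_congr_ae ?_
  filter_upwards [coeFn_mulCL u φ] with x hx
  rw [hx]

theorem fourier_neg_one_unit (x : Circ) :
    conj ((fourier (-1) : C(Circ, ℂ)) x) * (fourier (-1) : C(Circ, ℂ)) x = 1 := by
  have h1 : ((fourier (1 : ℤ) : C(Circ, ℂ))) x = conj ((fourier (-1) : C(Circ, ℂ)) x) := by
    have := fourier_neg (n := (-1 : ℤ)) (x := x)
    simpa using this
  rw [← h1, ← fourier_add]
  norm_num

/-- The key identity derived from 0 = B(u,v) - B(S*u, S*v). -/
theorem star_identity (hθ : IsInner θ) {φ : L2}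
    (hyp : ∀ u : Linf, inclL2 u ∈ Ktheta θ → ttoepApply θ φ u = 0)
    {u : Linf} (hu : inclL2 u ∈ Ktheta θ) {v : L2} (hv : v ∈ Ktheta θ) :
    fourierCoeff (⇑u) 0 * ⟪v, φ⟫ + conj (cf v 0) * (∫ x, u x * φ x ∂hm)
      = fourierCoeff (⇑u) 0 * conj (cf v 0) * (∫ x, φ x ∂hm) := by
  set a := fourierCoeff (⇑u) 0 with ha
  set b := cf v 0 with hb
  have T1 : ∫ x, conj (v x) * (u x * φ x) ∂hm = 0 := by
    refine pairing_zero hθ ?_ hv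
    rw [← ttoepApply_eq]
    exact hyp u hu
  have husst : inclL2 (sstarInf u) ∈ Ktheta θ := by
    rw [inclL2_sstarInf]
    exact sstar_mem hθ hu
  have T2 : ∫ x, conj ((sstarL2 v) x) * ((sstarInf u) x * φ x) ∂hm = 0 := by
    refine pairing_zero hθ ?_ (sstar_mem hθ hv)
    rw [← ttoepApply_eq]
    exact hyp (sstarInf u) husst
  have big : ∫ x, (a * (conj (v x) * φ x) + conj b * (u x * φ x)
      - a * conj b * φ x) ∂hm = 0 := by
    have hpt : (fun x => a * (conj (v x) * φ x) + conj b * (u x * φ x)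
          - a * conj b * φ x)
        =ᵐ[hm] fun x => conj (v x) * (u x * φ x)
          - conj ((sstarL2 v) x) * ((sstarInf u) x * φ x) := by
      filter_upwards [coeFn_mulCL (fourierLp ⊤ (-1)) (v - cf v 0 • oneL2),
        Lp.coeFn_sub v (cf v 0 • oneL2), Lp.coeFn_smul (cf v 0) (oneL2 : L2), coeFn_oneL2,
        coeFn_fourierLp ⊤ (-1),
        coeFn_mulInf (fourierLp ⊤ (-1)) (u - fourierCoeff (⇑u) 0 • oneInf),
        Lp.coeFn_sub u (fourierCoeff (⇑u) 0 • oneInf),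
        Lp.coeFn_smul (fourierCoeff (⇑u) 0) (oneInf : Linf), coeFn_oneInf]
        with x h1 h2 h3 h4 h5 h6 h7 h8 h9
      have hsv : (sstarL2 v) x = (fourier (-1) : C(Circ, ℂ)) x * (v x - b) := by
        rw [sstarL2]
        rw [h1, h5, h2, Pi.sub_apply, h3, Pi.smul_apply, h4, smul_eq_mul, mul_one, ← hb]
      have hsu : (sstarInf u) x = (fourier (-1) : C(Circ, ℂ)) x * (u x - a) := by
        rw [sstarInf]
        rw [h6, h5, h7, Pi.sub_apply, h8, Pi.smul_apply, h9, smul_eq_mul, mul_one, ← ha]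
      rw [hsv, hsu, map_mul, map_sub]
      have hc1 := fourier_neg_one_unit x
      linear_combination ((conj (v x) - conj b) * ((u x - a) * φ x)) * hc1
    have hI2 : Integrable (fun x => conj ((sstarL2 v) x) * ((sstarInf u) x * φ x)) hm :=
      intg3 (sstarL2 v) (sstarInf u) φ
    rw [integral_congr_ae hpt, integral_sub (intg3 v u φ) hI2, T1, T2, sub_zero]
  have IA : Integrable (fun x => a * (conj (v x) * φ x)) hm := (intg2 v φ).const_mul a
  have IB : Integrable (fun x => conj b * (u x * φ x)) hm := (intg1 u φ).const_mul (conj b)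
  have IC : Integrable (fun x => a * conj b * φ x) hm := (intg0 φ).const_mul (a * conj b)
  have IAB : Integrable (fun x => a * (conj (v x) * φ x)
      + conj b * (u x * φ x)) hm := IA.add IB
  have big2 : (∫ x, a * (conj (v x) * φ x) ∂hm) + (∫ x, conj b * (u x * φ x) ∂hm)
      - (∫ x, a * conj b * φ x ∂hm) = 0 := by
    rw [← integral_add IA IB, ← integral_sub IAB IC]
    exact big
  rw [integral_const_mul, integral_const_mul, integral_const_mul] at big2
  have hinner : ⟪v, φ⟫ = ∫ x, conj (v x) * φ x ∂hm := inner_L2 v φ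
  rw [hinner]
  linear_combination big2

end Aux6


section Aux7

open scoped ComplexInnerProductSpace

variable {θ : Linf}

theorem inner_oneL2_left (w : L2) : ⟪(oneL2 : L2), w⟫ = cf w 0 := by
  rw [cf_eq_inner, oneL2_eq]

theorem inner_oneL2_right (w : L2) : ⟪w, (oneL2 : L2)⟫ = conj (cf w 0) := by
  rw [← inner_conj_symm, inner_oneL2_left]

theorem mulCL_oneL2 (u : Linf) : mulCL u oneL2 = inclL2 u := by
  apply Lp.ext
  filter_upwards [coeFn_mulCL u oneL2, coeFn_oneL2, coeFn_inclL2 u] with x h1 h2 h3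
  rw [h1, h2, h3, mul_one]

theorem hard_direction (hθ : IsInner θ) (hθnc : ¬ IsConst θ) (φ : L2)
    (hyp : ∀ u : Linf, inclL2 u ∈ Ktheta θ → ttoepApply θ φ u = 0) :
    ∃ h₁ h₂ : L2, h₁ ∈ H2 ∧ h₂ ∈ H2 ∧ φ = mulCL θ h₁ + conjLp (mulCL θ h₂) := by
  have hκ : kk θ ≠ 0 := kk_ne_zero hθ hθnc
  have hk0mem : inclL2 (k0inf θ) ∈ Ktheta θ := by
    rw [inclL2_k0inf]; exact k0_mem hθ
  have hcf0 : fourierCoeff (⇑(k0inf θ)) 0 = kk θ := by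
    rw [← cf_inclL2, inclL2_k0inf, cf_k0_zero]
  set μI := ∫ x, φ x ∂hm with hμI
  set α0 : ℂ := ⟪k0L2 θ, φ⟫ with hα0
  set β0 := ∫ x, (k0inf θ) x * φ x ∂hm with hβ0
  set δ' := (kk θ * μI - β0) / kk θ with hδ'
  set γ' := (kk θ * μI - α0) / kk θ with hγ'
  -- Step (a)
  have stepA : ∀ v ∈ Ktheta θ, ⟪v, φ⟫ = conj (cf v 0) * δ' := by
    intro v hv
    have h := star_identity hθ hyp hk0mem hv
    rw [hcf0] at h
    rw [hδ', mul_div_assoc', eq_div_iff hκ]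
    linear_combination h
  set y₁ := φ - δ' • oneL2 with hy₁def
  have hy₁ : y₁ ∈ (Ktheta θ)ᗮ := by
    rw [Submodule.mem_orthogonal]
    intro w hw
    rw [hy₁def, inner_sub_right, inner_smul_right, stepA w hw, inner_oneL2_right]
    ring
  -- Step (b)
  have stepB : ∀ u : Linf, inclL2 u ∈ Ktheta θ →
      (∫ x, u x * φ x ∂hm) = fourierCoeff (⇑u) 0 * γ' := by
    intro u hu
    have h := star_identity hθ hyp hu (k0_mem hθ)
    have hck : conj (cf (k0L2 θ) 0) = kk θ := by rw [cf_k0_zero, conj_kk]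
    rw [hck, ← hα0] at h
    rw [hγ', mul_div_assoc', eq_div_iff hκ]
    linear_combination h
  set y₂ := conjLp φ - conj γ' • oneL2 with hy₂def
  have hy₂ : y₂ ∈ (Ktheta θ)ᗮ := by
    rw [Submodule.mem_orthogonal']
    refine test_dense hθ y₂ ?_
    intro u hu
    have h1 : ⟪conjLp φ, inclL2 u⟫ = ∫ x, u x * φ x ∂hm := by
      rw [inner_L2]
      refine integral_congr_ae ?_
      filter_upwards [coeFn_conjLp φ, coeFn_inclL2 u] with x hx1 hx2
      rw [hx1, hx2, Complex.conj_conj, mul_comm]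
    have h2 : ⟪(oneL2 : L2), inclL2 u⟫ = fourierCoeff (⇑u) 0 := by
      rw [inner_oneL2_left, cf_inclL2]
    rw [hy₂def, inner_sub_left, inner_smul_left, h1, h2, stepB u hu, Complex.conj_conj]
    ring
  -- Decomposition
  set h₁ := Pp (mulCL (conjLp θ) (Pp y₁)) with hh₁def
  set h₂ := Pp (mulCL (conjLp θ) (Pp y₂)) with hh₂def
  have hPp1 : Pp y₁ = mulCL θ h₁ := Pp_of_Kperp hθ hy₁
  have hPp2 : Pp y₂ = mulCL θ h₂ := Pp_of_Kperp hθ hy₂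
  set C := conjLp (mulCL θ h₂) with hCdef
  have eq1 : φ = δ' • oneL2 + (y₁ - Pp y₁) + mulCL θ h₁ := by
    rw [← hPp1, hy₁def]
    abel
  have eq2' : φ = γ' • oneL2 + conjLp (y₂ - Pp y₂) + C := by
    have e2 : conjLp φ = conj γ' • oneL2 + (y₂ - Pp y₂) + mulCL θ h₂ := by
      rw [← hPp2, hy₂def]
      abel
    have := congrArg conjLp e2
    rw [conjLp_conjLp, conjLp_add, conjLp_add, conjLp_smul, Complex.conj_conj,
      conjLp_oneL2] at this
    rw [this, hCdef]
  have hBmem : conjLp (y₂ - Pp y₂) ∈ H2 := by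
    rw [mem_H2_iff]
    intro n hn
    rw [cf_conjLp, mem_H2perp_iff.1 (sub_Pp_mem y₂) (-n) (by omega), map_zero]
  have hPpC : Pp C = cf C 0 • oneL2 := by
    refine Pp_eq_of_upper fun n hn => ?_
    rw [hCdef, cf_conjLp, mem_H2_iff.1 (mulθ_mem_H2 hθ (Pp_mem _)) (-n) (by omega), map_zero]
  have ePp1 : Pp φ = δ' • oneL2 + mulCL θ h₁ := by
    conv_lhs => rw [eq1]
    rw [map_add, map_add, Pp.map_smul, Pp_of_mem oneL2_mem_H2,
      Pp_of_perp (sub_Pp_mem y₁), Pp_of_mem (mulθ_mem_H2 hθ (Pp_mem _)), add_zero]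
  have ePp2 : δ' • oneL2 + mulCL θ h₁
      = γ' • oneL2 + conjLp (y₂ - Pp y₂) + cf C 0 • oneL2 := by
    rw [← ePp1]
    conv_lhs => rw [eq2']
    rw [map_add, map_add, Pp.map_smul, Pp_of_mem oneL2_mem_H2, Pp_of_mem hBmem, hPpC]
  have hEq : φ = (δ' - cf C 0) • oneL2 + mulCL θ h₁ + C := by
    have h5 : φ + cf C 0 • oneL2 = δ' • oneL2 + mulCL θ h₁ + C := by
      calc φ + cf C 0 • oneL2
          = (γ' • oneL2 + conjLp (y₂ - Pp y₂) + cf C 0 • oneL2) + C := by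
            conv_lhs => rw [eq2']
            abel
        _ = (δ' • oneL2 + mulCL θ h₁) + C := by rw [← ePp2]
        _ = δ' • oneL2 + mulCL θ h₁ + C := by abel
    have h6 : φ = δ' • oneL2 + mulCL θ h₁ + C - cf C 0 • oneL2 := by
      rw [← h5]; abel
    rw [h6, sub_smul]
    abel
  -- Step (c)
  have hpair : ⟪k0L2 θ, mulCL (k0inf θ) φ⟫ = 0 := by
    have hz := hyp (k0inf θ) hk0mem
    rw [ttoepApply_eq] at hz
    rw [← inner_Pth_right hθ (k0_mem hθ), hz, inner_zero_right]
  have hterm1 : ⟪k0L2 θ, mulCL (k0inf θ) (mulCL θ h₁)⟫ = 0 := by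
    rw [← inner_Pth_right hθ (k0_mem hθ),
      E1 hθ (Ktheta_le_H2 hk0mem) (Pp_mem _), inner_zero_right]
  have hterm2 : ⟪k0L2 θ, mulCL (k0inf θ) C⟫ = 0 := by
    rw [hCdef, ← inner_Pth_right hθ (k0_mem hθ),
      E2 hθ hk0mem (Pp_mem _), inner_zero_right]
  have hterm0 : mulCL (k0inf θ) ((δ' - cf C 0) • oneL2)
      = (δ' - cf C 0) • k0L2 θ := by
    rw [(mulCL (k0inf θ)).map_smul, mulCL_oneL2, inclL2_k0inf]
  have he0 : (δ' - cf C 0) * ⟪k0L2 θ, k0L2 θ⟫ = 0 := by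
    have h7 : ⟪k0L2 θ, mulCL (k0inf θ) φ⟫
        = (δ' - cf C 0) * ⟪k0L2 θ, k0L2 θ⟫ := by
      conv_lhs => rw [hEq]
      rw [map_add, map_add, inner_add_right, inner_add_right, hterm1, hterm2,
        hterm0, inner_smul_right]
      ring
    rw [← h7, hpair]
  have he : δ' - cf C 0 = 0 := by
    rcases mul_eq_zero.1 he0 with h | h
    · exact h
    · exact absurd h (inner_k0_self_ne_zero hθ hθnc)
  refine ⟨h₁, h₂, Pp_mem _, Pp_mem _, ?_⟩
  rw [hEq, he, zero_smul, zero_add, hCdef]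

end Aux7

/-- For a non-constant inner function `θ` and `φ ∈ L²`, the truncated
Toeplitz operator `A^θ_φ` vanishes on the dense subset `K_θ ∩ H^∞` of `K_θ` if and only if
`φ ∈ θH² + conj(θH²)`. -/
theorem statement_0 (θ : Linf) (hθ : IsInner θ) (hθnc : ¬ IsConst θ) (φ : L2) :
    (∀ u : Linf, inclL2 u ∈ Ktheta θ → ttoepApply θ φ u = 0) ↔
      ∃ h₁ h₂ : L2, h₁ ∈ H2 ∧ h₂ ∈ H2 ∧ φ = mulCL θ h₁ + conjLp (mulCL θ h₂) := by
  constructor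
  · intro hyp
    exact hard_direction hθ hθnc φ hyp
  · rintro ⟨h₁, h₂, hh₁, hh₂, rfl⟩ u hu
    exact easy_piece hθ hu hh₁ hh₂

end HTTO
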